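/- arXiv:2105.02479 — 4 statements merged into one kernel-verified Lean document; each statement's English description precedes it below -/
import Mathlib

section
/- Let G be a group acting on a set α, let (H_ℓ)_{ℓ∈ℕ} be a countable family of G-invariant subsets of α, and let (F_n)_{n∈ℕ} be a sequence of nonempty finite G-invariant subsets of α such that for every ℓ the ratio #(F_n ∩ H_ℓ)/#F_n tends to 0 as n → ∞. Then for every real ε with 0 < ε < 1 there exists a sequence of subsets F'_n ⊆ F_n such that: (1) #F'_n ≥ (1−ε)·#F_n for all n; (2) each F'_n is G-invariant; and (3) for every ℓ there exists N(ℓ) such that F'_n ∩ H_ℓ = ∅ for all n ≥ N(ℓ). -/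
open Pointwise Filter

private lemma mem_smul_inv_iff {G α : Type*} [Group G] [MulAction G α]
    {S : Set α} {g : G} (hS : g • S = S) (a : α) : g⁻¹ • a ∈ S ↔ a ∈ S := by
  conv_rhs => rw [← hS]
  rw [Set.mem_smul_set_iff_inv_smul_mem]

/-- Combinatorial extraction lemma (Favre–Gauthier): from a sequence of nonempty finite
`G`-invariant subsets `F n` with `#(F n ∩ H ℓ) = o(#F n)` for every `ℓ`, one can extract
`G`-invariant subsets `F' n ⊆ F n` of proportion at least `1 - ε` eventually avoiding each `H ℓ`. -/
theorem extraction_lemma {G α : Type*} [Group G] [MulAction G α]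
    (H : ℕ → Set α) (hH : ∀ ℓ (g : G), g • H ℓ = H ℓ)
    (F : ℕ → Finset α) (hFne : ∀ n, (F n).Nonempty)
    (hFinv : ∀ n (g : G), g • (F n : Set α) = (F n : Set α))
    (hratio : ∀ ℓ, Tendsto (fun n => (((F n : Set α) ∩ H ℓ).ncard : ℝ) / (F n).card)
      atTop (nhds 0))
    (ε : ℝ) (hε0 : 0 < ε) (hε1 : ε < 1) :
    ∃ F' : ℕ → Finset α,
      (∀ n, F' n ⊆ F n) ∧
      (∀ n, ((1 - ε) * (F n).card : ℝ) ≤ (F' n).card) ∧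
      (∀ n (g : G), g • (F' n : Set α) = (F' n : Set α)) ∧
      (∀ ℓ, ∃ N, ∀ n ≥ N, (F' n : Set α) ∩ H ℓ = ∅) := by
  classical
  have hcard_pos : ∀ n, (0 : ℝ) < (F n).card := fun n => by
    exact_mod_cast Finset.card_pos.mpr (hFne n)
  -- filter description of the intersection count
  have hinter : ∀ n j, ((F n : Set α) ∩ H j).ncard
      = ((F n).filter (fun x => x ∈ H j)).card := by
    intro n j
    rw [show (F n : Set α) ∩ H j = (((F n).filter (fun x => x ∈ H j)) : Set α) by
      ext x; simp [Finset.mem_filter, Set.mem_inter_iff]]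
    exact Set.ncard_coe_finset _
  -- choose thresholds N j
  have hNj : ∀ j : ℕ, ∃ N, ∀ n ≥ N,
      (((F n).filter (fun x => x ∈ H j)).card : ℝ) ≤ ε * (1/2)^(j+1) * (F n).card := by
    intro j
    have hpos : (0 : ℝ) < ε * (1/2)^(j+1) := by positivity
    have := (hratio j).eventually (eventually_le_nhds hpos)
    rw [eventually_atTop] at this
    obtain ⟨N, hN⟩ := this
    refine ⟨N, fun n hn => ?_⟩
    have h := hN n hn
    rw [hinter n j] at h
    rw [div_le_iff₀ (hcard_pos n)] at h
    exact h
  choose N hN using hNj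
  -- monotone thresholds
  set M : ℕ → ℕ := fun ℓ => max ℓ ((Finset.range (ℓ+1)).sup N) with hM
  have hMle : ∀ j ℓ (n : ℕ), j ≤ ℓ → M ℓ ≤ n → N j ≤ n := by
    intro j ℓ n hjℓ hn
    exact le_trans (le_trans (Finset.le_sup (Finset.mem_range.mpr (Nat.lt_succ_of_le hjℓ))) (le_max_right _ _)) hn
  have hMself : ∀ ℓ, ℓ ≤ M ℓ := fun ℓ => le_max_left _ _
  have hMmono : Monotone M := by
    intro a b hab
    exact max_le_max hab (Finset.sup_mono (by
      intro x hx; simp only [Finset.mem_range] at *; omega))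
  -- cutoff k n
  set k : ℕ → ℕ := fun n => Nat.findGreatest (fun m => ∀ j < m, M j ≤ n) (n+1) with hk
  have hkspec : ∀ n, ∀ j < k n, M j ≤ n := by
    intro n
    exact Nat.findGreatest_spec (P := fun m => ∀ j < m, M j ≤ n) (Nat.zero_le _)
      (fun j hj => absurd hj (Nat.not_lt_zero j))
  have hkge : ∀ ℓ n, M ℓ ≤ n → ℓ < k n := by
    intro ℓ n hn
    have h1 : ℓ + 1 ≤ n + 1 := Nat.succ_le_succ (le_trans (hMself ℓ) hn)
    have h2 : ∀ j < ℓ + 1, M j ≤ n := fun j hj => le_trans (hMmono (Nat.lt_succ_iff.mp hj)) hn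
    exact Nat.le_findGreatest h1 h2
  -- the extraction
  refine ⟨fun n => (F n).filter (fun x => ∀ j < k n, x ∉ H j),
    fun n => Finset.filter_subset _ _, ?_, ?_, ?_⟩
  · -- cardinality
    intro n
    have hsplit : (F n).card = ((F n).filter (fun x => ∀ j < k n, x ∉ H j)).card
        + ((F n).filter (fun x => ¬ ∀ j < k n, x ∉ H j)).card :=
      (Finset.card_filter_add_card_filter_not _).symm
    have hbad : (((F n).filter (fun x => ¬ ∀ j < k n, x ∉ H j)).card : ℝ)
        ≤ ε * (F n).card := by
      have hsub : (F n).filter (fun x => ¬ ∀ j < k n, x ∉ H j)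
          ⊆ (Finset.range (k n)).biUnion (fun j => (F n).filter (fun x => x ∈ H j)) := by
        intro x hx
        simp only [Finset.mem_filter, not_forall, not_not, exists_prop] at hx
        obtain ⟨hxF, j, hjk, hxH⟩ := hx
        exact Finset.mem_biUnion.mpr ⟨j, Finset.mem_range.mpr hjk,
          Finset.mem_filter.mpr ⟨hxF, hxH⟩⟩
      calc (((F n).filter (fun x => ¬ ∀ j < k n, x ∉ H j)).card : ℝ)
          ≤ (((Finset.range (k n)).biUnion (fun j => (F n).filter (fun x => x ∈ H j))).card : ℝ) := by
            exact_mod_cast Finset.card_le_card hsub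
        _ ≤ ∑ j ∈ Finset.range (k n), (((F n).filter (fun x => x ∈ H j)).card : ℝ) := by
            exact_mod_cast Finset.card_biUnion_le
        _ ≤ ∑ j ∈ Finset.range (k n), ε * (1/2)^(j+1) * (F n).card := by
            refine Finset.sum_le_sum fun j hj => ?_
            exact hN j n (hMle j j n le_rfl (hkspec n j (Finset.mem_range.mp hj)))
        _ = ε * (F n).card * ∑ j ∈ Finset.range (k n), ((1:ℝ)/2)^(j+1) := by
            rw [Finset.mul_sum]; exact Finset.sum_congr rfl fun j _ => by ring
        _ ≤ ε * (F n).card * 1 := by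
            refine mul_le_mul_of_nonneg_left ?_ (by positivity)
            have : ∑ j ∈ Finset.range (k n), ((1:ℝ)/2)^(j+1)
                = (1/2) * ∑ j ∈ Finset.range (k n), ((1:ℝ)/2)^j := by
              rw [Finset.mul_sum]; exact Finset.sum_congr rfl fun j _ => by ring
            rw [this]
            have h2 := sum_geometric_two_le (k n)
            nlinarith
        _ = ε * (F n).card := mul_one _
    have : ((F n).card : ℝ) = (((F n).filter (fun x => ∀ j < k n, x ∉ H j)).card : ℝ)
        + (((F n).filter (fun x => ¬ ∀ j < k n, x ∉ H j)).card : ℝ) := by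
      exact_mod_cast hsplit
    linarith
  · -- invariance
    intro n g
    ext x
    rw [Set.mem_smul_set_iff_inv_smul_mem]
    simp only [Finset.coe_filter, Set.mem_setOf_eq]
    constructor
    · rintro ⟨hxF, hx⟩
      refine ⟨(mem_smul_inv_iff (hFinv n g) x).mp hxF, fun j hj hxH => ?_⟩
      exact hx j hj ((mem_smul_inv_iff (hH j g) x).mpr hxH)
    · rintro ⟨hxF, hx⟩
      refine ⟨(mem_smul_inv_iff (hFinv n g) x).mpr hxF, fun j hj hxH => ?_⟩
      exact hx j hj ((mem_smul_inv_iff (hH j g) x).mp hxH)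
  · -- eventual avoidance
    intro ℓ
    refine ⟨M ℓ, fun n hn => ?_⟩
    rw [Set.eq_empty_iff_forall_notMem]
    rintro x ⟨hxF, hxH⟩
    simp only [Finset.coe_filter, Set.mem_setOf_eq] at hxF
    exact hxF.2 ℓ (hkge ℓ n hn) hxH
end

section
/- For t ∈ ℂ, let p_t : ℂ → ℂ be the quadratic polynomial p_t(z) = z² + t, and let p_t^{∘n} denote its n-th iterate. There is no t ∈ ℂ such that both forward orbits {p_t^{∘n}(0) : n ≥ 0} and {p_t^{∘n}(4) : n ≥ 0} are bounded; that is, for every t ∈ ℂ at least one of the two orbits is unbounded. -/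
/-!
If `‖z‖ > 2` and `‖c‖ ≤ ‖z‖`, then `‖z² + c‖ ≥ ‖z‖² - ‖z‖ = ‖z‖ (‖z‖ - 1)` with `‖z‖ - 1 > 1`,
so the orbit of `z` under `z ↦ z² + c` escapes to infinity geometrically. Applied to
`z = t = p_t(0)` this shows that a bounded orbit of `0` forces `‖t‖ ≤ 2`, and then `z = 4`
satisfies the hypotheses, so the orbit of `4` is unbounded.
-/

open Filter

section Escape

variable {𝕜 : Type*} [NormedDivisionRing 𝕜] {c z : 𝕜}

lemma norm_mul_sub_one_le_norm_sq_add (hc : ‖c‖ ≤ ‖z‖) :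
    ‖z‖ * (‖z‖ - 1) ≤ ‖z ^ 2 + c‖ :=
  calc ‖z‖ * (‖z‖ - 1) ≤ ‖z ^ 2‖ - ‖c‖ := by rw [norm_pow]; nlinarith
    _ ≤ ‖z ^ 2 + c‖ := norm_sub_le_norm_add _ _

lemma norm_mul_pow_le_norm_iterate_sq_add (hz : 2 < ‖z‖) (hc : ‖c‖ ≤ ‖z‖) (n : ℕ) :
    ‖z‖ * (‖z‖ - 1) ^ n ≤ ‖(fun w => w ^ 2 + c)^[n] z‖ := by
  induction n with
  | zero => simp
  | succ n ih =>
    set w := (fun w => w ^ 2 + c)^[n] z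
    have hzw : ‖z‖ ≤ ‖w‖ :=
      le_trans (le_mul_of_one_le_right (norm_nonneg z) (one_le_pow₀ (by linarith))) ih
    calc ‖z‖ * (‖z‖ - 1) ^ (n + 1) = ‖z‖ * (‖z‖ - 1) ^ n * (‖z‖ - 1) := by ring
      _ ≤ ‖w‖ * (‖w‖ - 1) := by gcongr; linarith
      _ ≤ ‖w ^ 2 + c‖ := norm_mul_sub_one_le_norm_sq_add (by linarith)
      _ = ‖(fun w => w ^ 2 + c)^[n + 1] z‖ := by rw [Function.iterate_succ_apply']

lemma tendsto_norm_iterate_sq_add_atTop (hz : 2 < ‖z‖) (hc : ‖c‖ ≤ ‖z‖) :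
    Tendsto (fun n => ‖(fun w => w ^ 2 + c)^[n] z‖) atTop atTop :=
  tendsto_atTop_mono (norm_mul_pow_le_norm_iterate_sq_add hz hc) <|
    (tendsto_pow_atTop_atTop_of_one_lt (by linarith)).const_mul_atTop (by linarith)

end Escape

/-- For no parameter `t ∈ ℂ` are both forward orbits of `0` and of `4` under
`p_t(z) = z² + t` bounded. -/
theorem no_common_bounded_orbit (t : ℂ) :
    ¬ ((∃ M : ℝ, 0 ≤ M ∧ ∀ n : ℕ, ‖(fun z => z ^ 2 + t)^[n] 0‖ ≤ M) ∧
       (∃ M : ℝ, 0 ≤ M ∧ ∀ n : ℕ, ‖(fun z => z ^ 2 + t)^[n] 4‖ ≤ M)) := by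
  rintro ⟨⟨M₀, -, h₀⟩, ⟨M₄, -, h₄⟩⟩
  have ht : ‖t‖ ≤ 2 := by
    by_contra! ht
    obtain ⟨n, hn⟩ :=
      ((tendsto_norm_iterate_sq_add_atTop ht le_rfl).eventually_gt_atTop M₀).exists
    have h₀n := h₀ (n + 1)
    rw [Function.iterate_succ_apply, zero_pow two_ne_zero, zero_add] at h₀n
    exact h₀n.not_gt hn
  have h4 : ‖(4 : ℂ)‖ = 4 := by norm_num
  have h4_escapes := tendsto_norm_iterate_sq_add_atTop (c := t) (z := (4 : ℂ))
    (by rw [h4]; norm_num) (by rw [h4]; linarith)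
  obtain ⟨n, hn⟩ := (h4_escapes.eventually_gt_atTop M₄).exists
  exact (h₄ n).not_gt hn
end

section
/- For t ∈ ℂ, let p_t : ℂ → ℂ be the quadratic polynomial p_t(z) = z² + t, and let p_t^{∘n} denote its n-th iterate; a point z ∈ ℂ is preperiodic under p_t if there exist integers n > m ≥ 0 with p_t^{∘n}(z) = p_t^{∘m}(z). Then there is no t ∈ ℂ such that both 0 and 4 are preperiodic under p_t. -/
/-- Escape lemma: if a predicate `P` on norms holds at `z`, is preserved by `f`,
and forces strict growth of the norm, then the orbit of `z` has no collisions. -/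
lemma escape_no_collision (f : ℂ → ℂ) (z : ℂ) (P : ℝ → Prop) (hz : P ‖z‖)
    (hstep : ∀ w : ℂ, P ‖w‖ → P ‖f w‖ ∧ ‖w‖ < ‖f w‖) :
    ∀ n m : ℕ, m < n → f^[n] z ≠ f^[m] z := by
  have hPiter : ∀ k, P ‖f^[k] z‖ := by
    intro k
    induction k with
    | zero => simpa using hz
    | succ k ih =>
      rw [Function.iterate_succ_apply']
      exact (hstep _ ih).1
  have hmono : StrictMono (fun k => ‖f^[k] z‖) := by
    apply strictMono_nat_of_lt_succ
    intro k
    have := (hstep _ (hPiter k)).2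
    simpa [Function.iterate_succ_apply'] using this
  intro n m hmn heq
  have : ‖f^[m] z‖ < ‖f^[n] z‖ := hmono hmn
  rw [heq] at this
  exact lt_irrefl _ this

lemma norm_sq_add (w t : ℂ) : ‖w‖ ^ 2 - ‖t‖ ≤ ‖w ^ 2 + t‖ := by
  have h1 : ‖w ^ 2‖ - ‖t‖ ≤ ‖w ^ 2 + t‖ := by
    have := norm_sub_norm_le (w ^ 2) (-t)
    simpa [sub_neg_eq_add] using this
  simpa [norm_pow] using h1

/-- There is no `t ∈ ℂ` such that both `0` and `4` are preperiodic under `p_t(z) = z² + t`. -/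
theorem no_common_preperiodic (t : ℂ) :
    ¬ ((∃ n m : ℕ, m < n ∧ (fun z => z ^ 2 + t)^[n] 0 = (fun z => z ^ 2 + t)^[m] 0) ∧
       (∃ n m : ℕ, m < n ∧ (fun z => z ^ 2 + t)^[n] 4 = (fun z => z ^ 2 + t)^[m] 4)) := by
  rintro ⟨⟨n0, m0, hmn0, h0⟩, ⟨n4, m4, hmn4, h4⟩⟩
  set f : ℂ → ℂ := fun z => z ^ 2 + t with hf
  by_cases ht : ‖t‖ ≤ 2
  · -- orbit of 4 escapes
    refine escape_no_collision f 4 (fun r => 4 ≤ r) ?_ ?_ n4 m4 hmn4 h4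
    · norm_num
    · intro w hw
      have hb := norm_sq_add w t
      constructor
      · nlinarith [hb]
      · nlinarith [hb]
  · -- ‖t‖ > 2 : orbit of 0 escapes; shift by one step since f 0 = t
    push_neg at ht
    have h0' : f^[n0] t = f^[m0] t := by
      have : f (f^[n0] 0) = f (f^[m0] 0) := by rw [h0]
      have h2 : f^[n0 + 1] 0 = f^[m0 + 1] 0 := by
        simpa [Function.iterate_succ_apply'] using this
      have hft : f 0 = t := by simp [hf]
      simpa [Function.iterate_succ_apply, hft] using h2
    refine escape_no_collision f t (fun r => ‖t‖ ≤ r) le_rfl ?_ n0 m0 hmn0 h0'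
    intro w hw
    have hb := norm_sq_add w t
    constructor
    · nlinarith [hb]
    · nlinarith [hb]
end

section
/- For t ∈ ℂ, let p_t : ℂ → ℂ be the quadratic polynomial p_t(z) = z² + t, and let p_t^{∘n} denote its n-th iterate. There exists a constant C ≥ 0 such that for every t ∈ ℂ with |t| ≥ 3 and every u ∈ {0, 4}, the limit G_t(u) = lim_{n→∞} 2^{−n}·log⁺|p_t^{∘n}(u)| exists (log⁺ x = log(max(x,1))) and satisfies |G_t(u) − (1/2)·log|t|| ≤ C. -/
/-!
Writing `L n = log⁺ |p_t^{∘n}(u)|`, the triangle inequality gives `|L (n+1) - 2 L n| ≤ c`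
with `c = log⁺ |t| + log 2` everywhere, and with `c = log 2` once the orbit has entered the
region `2|t| ≤ |z|²`, forward-invariant when `|t| ≥ 2`. Such a bound makes `2^{-n} L n`
converge geometrically to a limit within `c` of `L 0`. For `u = 0` the orbit enters the region
at `p_t(0) = t`, and for `u = 4` at `p_t(4) = 16 + t` as soon as `|t| ≥ 32`, while for
`|t| < 32` the everywhere-valid bound is already uniform.
-/

open Filter Real Topology

theorem exists_tendsto_of_abs_sub_two_mul_le {L : ℕ → ℝ} {c : ℝ}
    (h : ∀ n, |L (n + 1) - 2 * L n| ≤ c) :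
    ∃ G, Tendsto (fun n => 1 / 2 ^ n * L n) atTop (𝓝 G) ∧ |G - L 0| ≤ c := by
  have hdist : ∀ n, dist (1 / 2 ^ n * L n) (1 / 2 ^ (n + 1) * L (n + 1)) ≤ c / 2 / 2 ^ n := by
    intro n
    have hdiff : 1 / 2 ^ n * L n - 1 / 2 ^ (n + 1) * L (n + 1) =
        -(L (n + 1) - 2 * L n) / 2 / 2 ^ n := by
      field_simp
      ring
    rw [Real.dist_eq, hdiff, abs_div, abs_div, abs_neg, abs_two, abs_pow, abs_two]
    gcongr
    exact h n
  obtain ⟨G, hG⟩ := cauchySeq_tendsto_of_complete (cauchySeq_of_le_geometric_two hdist)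
  refine ⟨G, hG, ?_⟩
  simpa [Real.dist_eq, abs_sub_comm] using dist_le_of_le_geometric_two_of_tendsto₀ hdist hG

theorem tendsto_half_of_tendsto_succ {L : ℕ → ℝ} {G : ℝ}
    (h : Tendsto (fun n => 1 / 2 ^ n * L (n + 1)) atTop (𝓝 G)) :
    Tendsto (fun n => 1 / 2 ^ n * L n) atTop (𝓝 (G / 2)) := by
  rw [← tendsto_add_atTop_iff_nat 1]
  convert h.div_const 2 using 2 with n
  rw [pow_succ]
  ring

theorem abs_posLog_sub_posLog_le_log_two {x y : ℝ} (hx : 0 ≤ x) (hy : 0 ≤ y)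
    (hxy : x ≤ 2 * y) (hyx : y ≤ 2 * x) : |log⁺ x - log⁺ y| ≤ log 2 := by
  have hlog2 : log⁺ 2 = log 2 := posLog_eq_log (by norm_num)
  have hx' : log⁺ x ≤ log 2 + log⁺ y := by
    grw [posLog_le_posLog hx hxy, posLog_mul, hlog2]
  have hy' : log⁺ y ≤ log 2 + log⁺ x := by
    grw [posLog_le_posLog hy hyx, posLog_mul, hlog2]
  rw [abs_le]
  constructor <;> linarith

section QuadraticOrbit

variable {t z : ℂ}

theorem abs_posLog_norm_sq_add_sub_le (t z : ℂ) :
    |log⁺ ‖z ^ 2 + t‖ - 2 * log⁺ ‖z‖| ≤ log⁺ ‖t‖ + log 2 := by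
  have hsq : log⁺ ‖z ^ 2‖ = 2 * log⁺ ‖z‖ := by
    rw [norm_pow, posLog_pow, Nat.cast_ofNat]
  have hup := posLog_norm_add_le (z ^ 2) t
  have hlow := posLog_norm_add_le (z ^ 2 + t) (-t)
  rw [add_neg_cancel_right, norm_neg] at hlow
  rw [abs_le]
  constructor <;> linarith

theorem norm_sq_le_two_mul_norm_sq_add (h : 2 * ‖t‖ ≤ ‖z‖ ^ 2) :
    ‖z‖ ^ 2 ≤ 2 * ‖z ^ 2 + t‖ := by
  have := norm_sub_le_norm_add (z ^ 2) t
  rw [norm_pow] at this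
  linarith

theorem norm_sq_add_le_two_mul_norm_sq (h : 2 * ‖t‖ ≤ ‖z‖ ^ 2) :
    ‖z ^ 2 + t‖ ≤ 2 * ‖z‖ ^ 2 := by
  have := norm_add_le (z ^ 2) t
  rw [norm_pow] at this
  linarith [norm_nonneg t]

theorem two_mul_norm_le_norm_sq_add_sq (ht : 2 ≤ ‖t‖) (h : 2 * ‖t‖ ≤ ‖z‖ ^ 2) :
    2 * ‖t‖ ≤ ‖z ^ 2 + t‖ ^ 2 := by
  have := norm_sq_le_two_mul_norm_sq_add h
  nlinarith

theorem abs_posLog_norm_sq_add_sub_le_of_escape (h : 2 * ‖t‖ ≤ ‖z‖ ^ 2) :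
    |log⁺ ‖z ^ 2 + t‖ - 2 * log⁺ ‖z‖| ≤ log 2 := by
  have hsq : 2 * log⁺ ‖z‖ = log⁺ (‖z‖ ^ 2) := by
    rw [posLog_pow, Nat.cast_ofNat]
  rw [hsq]
  exact abs_posLog_sub_posLog_le_log_two (norm_nonneg _) (by positivity)
    (norm_sq_add_le_two_mul_norm_sq h) (norm_sq_le_two_mul_norm_sq_add h)

theorem two_mul_norm_le_norm_iterate_sq (ht : 2 ≤ ‖t‖) (h : 2 * ‖t‖ ≤ ‖z‖ ^ 2) (n : ℕ) :
    2 * ‖t‖ ≤ ‖(· ^ 2 + t)^[n] z‖ ^ 2 := by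
  induction n with
  | zero => exact h
  | succ n ih =>
    rw [Function.iterate_succ_apply']
    exact two_mul_norm_le_norm_sq_add_sq ht ih

noncomputable def orbitPosLog (t z : ℂ) (n : ℕ) : ℝ :=
  log⁺ ‖(· ^ 2 + t)^[n] z‖

theorem orbitPosLog_succ (t z : ℂ) (n : ℕ) :
    orbitPosLog t z (n + 1) = orbitPosLog t (z ^ 2 + t) n := by
  rw [orbitPosLog, Function.iterate_succ_apply, orbitPosLog]

theorem orbitPosLog_succ' (t z : ℂ) (n : ℕ) :
    orbitPosLog t z (n + 1) = log⁺ ‖((· ^ 2 + t)^[n] z) ^ 2 + t‖ := by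
  rw [orbitPosLog, Function.iterate_succ_apply']

theorem exists_tendsto_orbitPosLog (t z : ℂ) :
    ∃ G, Tendsto (fun n => 1 / 2 ^ n * orbitPosLog t z n) atTop (𝓝 G) ∧
      |G - log⁺ ‖z‖| ≤ log⁺ ‖t‖ + log 2 :=
  exists_tendsto_of_abs_sub_two_mul_le fun n => by
    rw [orbitPosLog_succ']
    exact abs_posLog_norm_sq_add_sub_le t _

theorem exists_tendsto_orbitPosLog_of_escape (ht : 2 ≤ ‖t‖) (h : 2 * ‖t‖ ≤ ‖z‖ ^ 2) :
    ∃ G, Tendsto (fun n => 1 / 2 ^ n * orbitPosLog t z n) atTop (𝓝 G) ∧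
      |G - log⁺ ‖z‖| ≤ log 2 :=
  exists_tendsto_of_abs_sub_two_mul_le fun n => by
    rw [orbitPosLog_succ']
    exact abs_posLog_norm_sq_add_sub_le_of_escape (two_mul_norm_le_norm_iterate_sq ht h n)

theorem exists_tendsto_orbitPosLog_of_escape_apply (ht : 2 ≤ ‖t‖)
    (h : 2 * ‖t‖ ≤ ‖z ^ 2 + t‖ ^ 2) :
    ∃ G, Tendsto (fun n => 1 / 2 ^ n * orbitPosLog t z n) atTop (𝓝 G) ∧
      |2 * G - log⁺ ‖z ^ 2 + t‖| ≤ log 2 := by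
  obtain ⟨G, hG, hbound⟩ := exists_tendsto_orbitPosLog_of_escape ht h
  refine ⟨G / 2, tendsto_half_of_tendsto_succ ?_, by rwa [mul_div_cancel₀ G two_ne_zero]⟩
  simpa only [orbitPosLog_succ] using hG

theorem exists_tendsto_orbitPosLog_zero (ht : 2 ≤ ‖t‖) :
    ∃ G, Tendsto (fun n => 1 / 2 ^ n * orbitPosLog t 0 n) atTop (𝓝 G) ∧
      |2 * G - log⁺ ‖t‖| ≤ log 2 := by
  have h : 2 * ‖t‖ ≤ ‖(0 : ℂ) ^ 2 + t‖ ^ 2 := by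
    rw [zero_pow two_ne_zero, zero_add]
    nlinarith
  simpa only [zero_pow two_ne_zero, zero_add] using exists_tendsto_orbitPosLog_of_escape_apply ht h

theorem exists_tendsto_orbitPosLog_four_of_le (ht : 32 ≤ ‖t‖) :
    ∃ G, Tendsto (fun n => 1 / 2 ^ n * orbitPosLog t 4 n) atTop (𝓝 G) ∧
      |2 * G - log⁺ ‖t‖| ≤ 2 * log 2 := by
  have h16 : ‖(4 : ℂ) ^ 2‖ = 16 := by norm_num
  have hlo := norm_sub_le_norm_add t ((4 : ℂ) ^ 2)
  have hhi := norm_add_le t ((4 : ℂ) ^ 2)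
  rw [h16, add_comm] at hlo hhi
  obtain ⟨G, hG, hbound⟩ :=
    exists_tendsto_orbitPosLog_of_escape_apply (t := t) (z := 4) (by linarith) (by nlinarith)
  have hshift := abs_posLog_sub_posLog_le_log_two (norm_nonneg ((4 : ℂ) ^ 2 + t))
    (norm_nonneg t) (by linarith) (by linarith)
  refine ⟨G, hG, ?_⟩
  rw [abs_le] at hbound hshift ⊢
  constructor <;> linarith

theorem exists_tendsto_orbitPosLog_four (t : ℂ) :
    ∃ G, Tendsto (fun n => 1 / 2 ^ n * orbitPosLog t 4 n) atTop (𝓝 G) ∧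
      |2 * G - log⁺ ‖t‖| ≤ 13 * log 2 := by
  have hlog2 : 0 ≤ log 2 := log_nonneg one_le_two
  by_cases hlarge : 32 ≤ ‖t‖
  · obtain ⟨G, hG, hbound⟩ := exists_tendsto_orbitPosLog_four_of_le hlarge
    exact ⟨G, hG, hbound.trans (by linarith)⟩
  obtain ⟨G, hG, hbound⟩ := exists_tendsto_orbitPosLog t 4
  have h4 : log⁺ ‖(4 : ℂ)‖ = 2 * log 2 := by
    rw [show ‖(4 : ℂ)‖ = 2 ^ 2 by norm_num, posLog_pow, posLog_eq_log (by norm_num)]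
    norm_num
  have ht32 : log⁺ ‖t‖ ≤ 5 * log 2 := by
    grw [posLog_le_posLog (norm_nonneg t) (not_le.mp hlarge).le]
    rw [show (32 : ℝ) = 2 ^ 5 by norm_num, posLog_pow, posLog_eq_log (by norm_num)]
    norm_num
  refine ⟨G, hG, ?_⟩
  rw [abs_le] at hbound ⊢
  constructor <;> linarith [posLog_nonneg (x := ‖t‖)]

end QuadraticOrbit

/-- Asymptotics of the quadratic Green function: there is `C ≥ 0` such that for all `t` with
`|t| ≥ 3` and `u ∈ {0,4}`, the limit `G_t(u) = lim_n 2^{-n}·log⁺|p_t^{∘n}(u)|` exists and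
`|G_t(u) - (1/2)·log|t|| ≤ C`. -/
theorem quadratic_green_asymptotics :
    ∃ C : ℝ, 0 ≤ C ∧ ∀ t : ℂ, 3 ≤ ‖t‖ → ∀ u ∈ ({0, 4} : Set ℂ),
      ∃ G : ℝ, Tendsto
        (fun n : ℕ => (1 / (2 : ℝ) ^ n) *
          Real.log (max (‖(fun z => z ^ 2 + t)^[n] u‖) 1))
        atTop (nhds G) ∧
      |G - (1 / 2) * Real.log ‖t‖| ≤ C := by
  refine ⟨7 * log 2, by positivity, fun t ht u hu => ?_⟩
  simp_rw [max_comm _ (1 : ℝ), ← posLog_eq_log_max_one (norm_nonneg _)]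
  rw [← posLog_eq_log (by rw [abs_norm]; linarith)]
  change ∃ G, Tendsto (fun n => 1 / 2 ^ n * orbitPosLog t u n) atTop (𝓝 G) ∧ _
  obtain ⟨G, hG, hbound⟩ : ∃ G, Tendsto (fun n => 1 / 2 ^ n * orbitPosLog t u n) atTop (𝓝 G) ∧
      |2 * G - log⁺ ‖t‖| ≤ 13 * log 2 := by
    rcases hu with rfl | rfl
    · obtain ⟨G, hG, hbound⟩ := exists_tendsto_orbitPosLog_zero (t := t) (by linarith)
      exact ⟨G, hG, hbound.trans (by linarith [log_nonneg one_le_two])⟩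
    · exact exists_tendsto_orbitPosLog_four t
  refine ⟨G, hG, ?_⟩
  rw [abs_le] at hbound ⊢
  constructor <;> linarith
end
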